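/- Let V = (ker L_Ḡ)^⊥ ⊆ L²(ρ) and let P denote the orthogonal projection of L²(ρ) onto V. Suppose there exists φ̂ ∈ V with L_Ḡ φ̂ = P φ^f. Then φ̂ is the unique such element of V, and φ̂ is the unique minimizer of E over V: E(φ) > E(φ̂) for every φ ∈ V with φ ≠ φ̂. -/

import Mathlib

open MeasureTheory Set
open scoped BigOperators RealInnerProductSpace ENNReal
open scoped NNReal

noncomputable section

/-- The 1D data-based integral kernel `G`. -/
def Gker (N : ℕ) (u : Fin N → ℝ → ℝ) (r s : ℝ) : ℝ :=
  (N : ℝ)⁻¹ * ∑ i, ∫ x, (u i (x + r) + u i (x - r) - 2 * u i x) *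
    (u i (x + s) + u i (x - s) - 2 * u i x)

/-- The reweighted kernel `Ḡ(r,s) = G(r,s) / (p(r) p(s))`. -/
def Gbar (N : ℕ) (u : Fin N → ℝ → ℝ) (p : ℝ → ℝ) (r s : ℝ) : ℝ :=
  Gker N u r s / (p r * p s)

/-- The nonlocal operator `L_φ[u]` for `φ ∈ L²(ρ)`, using the canonical representative of `φ`
extended by zero outside `[0,R₀]`. -/
def LopLp (R₀ : ℝ) {ρ : Measure ℝ} (φ : Lp ℝ 2 ρ) (u : ℝ → ℝ) (x : ℝ) : ℝ :=
  ∫ y, (Set.Icc 0 R₀).indicator (φ : ℝ → ℝ) |y - x| * (u y - u x)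

/-- The loss functional `E(φ) = (1/N) Σ_i ‖L_φ[u_i] - f_i‖²_{L²(ℝ)}`. -/
def lossE (R₀ : ℝ) {ρ : Measure ℝ} (N : ℕ) (u : Fin N → ℝ → ℝ) (f : Fin N → ℝ → ℝ)
    (φ : Lp ℝ 2 ρ) : ℝ :=
  (N : ℝ)⁻¹ * ∑ i, ∫ x, (LopLp R₀ φ (u i) x - f i x) ^ 2

/-! ### Auxiliary machinery -/

/-- The symmetric second difference. -/
def Dd (u : ℝ → ℝ) (r x : ℝ) : ℝ := u (x + r) + u (x - r) - 2 * u x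

/-- The nonlocal operator applied to an honest function `φt`. -/
def Lop (φt : ℝ → ℝ) (u : ℝ → ℝ) (x : ℝ) : ℝ := ∫ r, φt r * Dd u r x

/-- Truncation of an `L²(ρ)` element to `[0, R₀]`. -/
def trunc (R₀ : ℝ) {ρ : Measure ℝ} (φ : Lp ℝ 2 ρ) : ℝ → ℝ :=
  (Set.Icc 0 R₀).indicator (φ : ℝ → ℝ)

lemma trunc_zero (R₀ : ℝ) {ρ : Measure ℝ} (φ : Lp ℝ 2 ρ) :
    ∀ r ∉ Set.Icc (0:ℝ) R₀, trunc R₀ φ r = 0 :=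
  fun _ hr => Set.indicator_of_notMem hr _

lemma Dd_cont {u : ℝ → ℝ} (hu : Continuous u) :
    Continuous fun q : ℝ × ℝ => Dd u q.1 q.2 := by
  unfold Dd
  exact ((hu.comp (continuous_snd.add continuous_fst)).add
    (hu.comp (continuous_snd.sub continuous_fst))).sub
    (continuous_const.mul (hu.comp continuous_snd))

lemma Dd_cont_x {u : ℝ → ℝ} (hu : Continuous u) (r : ℝ) :
    Continuous fun x => Dd u r x :=
  (Dd_cont hu).comp (continuous_const.prodMk continuous_id)

lemma Dd_cont_r {u : ℝ → ℝ} (hu : Continuous u) (x : ℝ) :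
    Continuous fun r => Dd u r x :=
  (Dd_cont hu).comp (continuous_id.prodMk continuous_const)

lemma Dd_bound {u : ℝ → ℝ} {M : ℝ} (hM : ∀ y, |u y| ≤ M) (r x : ℝ) :
    |Dd u r x| ≤ 4 * M := by
  have h1 := abs_le.1 (hM (x + r))
  have h2 := abs_le.1 (hM (x - r))
  have h3 := abs_le.1 (hM x)
  rw [Dd, abs_le]
  constructor <;> nlinarith [h1.1, h1.2, h2.1, h2.2, h3.1, h3.2]

lemma M_nonneg {u : ℝ → ℝ} {M : ℝ} (hM : ∀ y, |u y| ≤ M) : 0 ≤ M :=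
  le_trans (abs_nonneg _) (hM 0)

lemma Dd_zero {R₀ : ℝ} (hR₀ : 0 ≤ R₀) {u : ℝ → ℝ} {r : ℝ} (hr : r ∈ Set.Icc (0:ℝ) R₀)
    {x : ℝ} (hx : x ∉ Metric.cthickening R₀ (tsupport u)) : Dd u r x = 0 := by
  have hz : ∀ y : ℝ, dist x y ≤ R₀ → u y = 0 := by
    intro y hd
    by_contra h
    exact hx (Metric.mem_cthickening_of_dist_le x y R₀ (tsupport u)
      (subset_tsupport u (by simpa [Function.mem_support] using h)) hd)
  have e1 : u (x + r) = 0 := by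
    refine hz _ ?_
    have h : x - (x + r) = -r := by ring
    rw [Real.dist_eq, h, abs_neg, abs_of_nonneg hr.1]
    exact hr.2
  have e2 : u (x - r) = 0 := by
    refine hz _ ?_
    have h : x - (x - r) = r := by ring
    rw [Real.dist_eq, h, abs_of_nonneg hr.1]
    exact hr.2
  have e3 : u x = 0 := hz _ (by simpa [dist_self] using hR₀)
  simp [Dd, e1, e2, e3]

lemma integrable_comp_abs {f : ℝ → ℝ} (hf : Integrable f volume) :
    Integrable (fun x => f |x|) volume := by
  have h1 : IntegrableOn (fun x => f |x|) (Ioi 0) volume := by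
    refine (integrableOn_congr_fun (g := f) ?_ measurableSet_Ioi).mpr hf.integrableOn
    intro x hx
    simp [abs_of_pos (by exact hx : (0:ℝ) < x)]
  have h2 : IntegrableOn (fun x => f |x|) (Iic 0) volume := by
    rw [← Measure.map_neg_eq_self (volume : Measure ℝ)]
    have m : MeasurableEmbedding fun x : ℝ => -x := (Homeomorph.neg ℝ).measurableEmbedding
    rw [m.integrableOn_map_iff]
    simp_rw [Function.comp_def, abs_neg, neg_preimage, neg_Iic, neg_zero]
    exact Iff.mpr integrableOn_Ici_iff_integrableOn_Ioi h1
  have h3 := h2.union h1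
  rwa [Iic_union_Ioi, integrableOn_univ] at h3

/-- Representation of the nonlocal operator via the second difference. -/
lemma Lop_rep {R₀ : ℝ} {u : ℝ → ℝ} (hu : Continuous u) {M : ℝ} (hM : ∀ y, |u y| ≤ M)
    {φt : ℝ → ℝ} (hint : Integrable φt volume)
    (hsupp : ∀ r ∉ Set.Icc (0:ℝ) R₀, φt r = 0) (x : ℝ) :
    (∫ y, φt |y - x| * (u y - u x)) = Lop φt u x := by
  set g : ℝ → ℝ := fun t => φt |t| * (u (x + t) - u x) with hg
  have hA : Integrable (fun t => φt |t|) volume := integrable_comp_abs hint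
  have step0 : (∫ y, φt |y - x| * (u y - u x)) = ∫ t, g t := by
    rw [← integral_sub_right_eq_self g x]
    congr 1
    funext y
    simp only [hg]
    rw [show x + (y - x) = y from by ring]
  have hgint : Integrable g volume := by
    refine (hA.abs.mul_const (2 * M)).mono' ?_ (ae_of_all _ fun t => ?_)
    · exact hA.aestronglyMeasurable.mul
        (((hu.comp (continuous_const.add continuous_id)).sub
          continuous_const).aestronglyMeasurable)
    · have h1 := abs_le.1 (hM (x + t))
      have h2 := abs_le.1 (hM x)
      have hb : |u (x + t) - u x| ≤ 2 * M := by rw [abs_le]; constructor <;> nlinarith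
      have hge : ‖g t‖ = abs (φt |t|) * |u (x + t) - u x| := by
        simp only [hg]
        rw [Real.norm_eq_abs, abs_mul]
      rw [hge]
      exact mul_le_mul_of_nonneg_left hb (abs_nonneg _)
  have hgnegint : Integrable (fun t => g (-t)) volume := by
    have m : MeasurableEmbedding fun x : ℝ => -x := (Homeomorph.neg ℝ).measurableEmbedding
    have : Integrable (g ∘ fun t : ℝ => -t) volume := by
      rw [← m.integrable_map_iff, Measure.map_neg_eq_self]
      exact hgint
    exact this
  have heven : ∀ t : ℝ, g t + g (-t) = φt |t| * Dd u |t| x := by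
    intro t
    have hDd : Dd u |t| x = u (x + t) + u (x - t) - 2 * u x := by
      rcases abs_choice t with h | h
      · rw [h]; rfl
      · rw [h, Dd, show x + -t = x - t from by ring, show x - -t = x + t from by ring]
        ring
    simp only [hg, abs_neg, hDd]
    rw [show x + -t = x - t from by ring]
    ring
  have hneg : (∫ t, g (-t)) = ∫ t, g t := integral_neg_eq_self g _
  have h2 : (2:ℝ) * ∫ t, g t = ∫ t, (g t + g (-t)) := by
    rw [integral_add hgint hgnegint, hneg]; ring
  have h3 : (∫ t, (g t + g (-t))) = ∫ t, φt |t| * Dd u |t| x := by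
    congr 1; funext t; exact heven t
  have h4 : (∫ t, φt |t| * Dd u |t| x)
      = 2 * ∫ r in Ioi (0:ℝ), φt r * Dd u r x :=
    integral_comp_abs (f := fun r => φt r * Dd u r x)
  have h5 : (∫ r in Ioi (0:ℝ), φt r * Dd u r x) = ∫ r, φt r * Dd u r x := by
    rw [← integral_indicator measurableSet_Ioi]
    refine integral_congr_ae ?_
    filter_upwards [compl_mem_ae_iff.mpr (measure_singleton (0:ℝ))] with t ht
    have htne : t ≠ 0 := by simpa using ht
    rcases lt_or_gt_of_ne htne with hlt | hgt
    · rw [Set.indicator_of_notMem (by simpa using not_lt.mpr hlt.le : t ∉ Ioi (0:ℝ))]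
      rw [hsupp t (by simp [Set.mem_Icc]; intro h; linarith), zero_mul]
    · rw [Set.indicator_of_mem (by exact hgt)]
  have : (2:ℝ) * ∫ t, g t = 2 * ∫ r, φt r * Dd u r x := by
    rw [h2, h3, h4, h5]
  have hfin : (∫ t, g t) = ∫ r, φt r * Dd u r x := by linarith
  rw [step0, hfin]; rfl

lemma Lop_continuous {u : ℝ → ℝ} (hu : Continuous u) {M : ℝ} (hM : ∀ y, |u y| ≤ M)
    {φt : ℝ → ℝ} (hint : Integrable φt volume) : Continuous (Lop φt u) := by
  refine continuous_of_dominated (F := fun x r => φt r * Dd u r x)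
    (bound := fun r => |φt r| * (4 * M)) (fun x => ?_) (fun x => ae_of_all _ fun r => ?_)
    (hint.abs.mul_const _) (ae_of_all _ fun r => ?_)
  · exact hint.aestronglyMeasurable.mul (Dd_cont_r hu x).aestronglyMeasurable
  · rw [Real.norm_eq_abs, abs_mul]
    exact mul_le_mul_of_nonneg_left (Dd_bound hM r x) (abs_nonneg _)
  · exact continuous_const.mul (Dd_cont_x hu r)

lemma Lop_zero {R₀ : ℝ} (hR₀ : 0 ≤ R₀) {u : ℝ → ℝ}
    {φt : ℝ → ℝ} (hsupp : ∀ r ∉ Set.Icc (0:ℝ) R₀, φt r = 0)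
    {x : ℝ} (hx : x ∉ Metric.cthickening R₀ (tsupport u)) : Lop φt u x = 0 := by
  have : (fun r => φt r * Dd u r x) = fun _ => (0:ℝ) := by
    funext r
    by_cases hr : r ∈ Set.Icc (0:ℝ) R₀
    · rw [Dd_zero hR₀ hr hx, mul_zero]
    · rw [hsupp r hr, zero_mul]
  rw [Lop, this, integral_zero]

lemma Lop_hasCompactSupport {R₀ : ℝ} (hR₀ : 0 ≤ R₀) {u : ℝ → ℝ} (hcs : HasCompactSupport u)
    {φt : ℝ → ℝ} (hsupp : ∀ r ∉ Set.Icc (0:ℝ) R₀, φt r = 0) :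
    HasCompactSupport (Lop φt u) := by
  exact HasCompactSupport.intro (K := Metric.cthickening R₀ (tsupport u)) hcs.cthickening
    fun x hx => Lop_zero hR₀ hsupp hx

lemma Lop_memℒp {R₀ : ℝ} (hR₀ : 0 ≤ R₀) {u : ℝ → ℝ} (hu : Continuous u)
    (hcs : HasCompactSupport u) {M : ℝ} (hM : ∀ y, |u y| ≤ M)
    {φt : ℝ → ℝ} (hint : Integrable φt volume)
    (hsupp : ∀ r ∉ Set.Icc (0:ℝ) R₀, φt r = 0) :
    MemLp (Lop φt u) 2 volume :=
  (Lop_continuous hu hM hint).memLp_of_hasCompactSupport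
    (Lop_hasCompactSupport hR₀ hcs hsupp)

lemma memℒ2_mul_integrable {f g : ℝ → ℝ} (hf : MemLp f 2 volume) (hg : MemLp g 2 volume) :
    Integrable (fun x => f x * g x) volume := by
  have hb : Integrable (fun x => 1/2 * (f x ^ 2 + g x ^ 2)) volume := by
    simpa using (hf.integrable_sq.add hg.integrable_sq).const_mul (1/2 : ℝ)
  refine hb.mono'
    (hf.aestronglyMeasurable.mul hg.aestronglyMeasurable) (ae_of_all _ fun x => ?_)
  rw [Real.norm_eq_abs, abs_mul]
  nlinarith [sq_nonneg (|f x| - |g x|), sq_abs (f x), sq_abs (g x), abs_nonneg (f x),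
    abs_nonneg (g x)]

lemma habs3 (a b c : ℝ) : |a + b - 2 * c| ≤ |a| + |b| + 2 * |c| := by
  rw [abs_le]
  constructor <;> nlinarith [le_abs_self a, neg_abs_le a, le_abs_self b, neg_abs_le b,
    le_abs_self c, neg_abs_le c]

/-- Integrability and a uniform bound for the inner kernel integral. -/
lemma g_facts {u : ℝ → ℝ} (hu : Continuous u) (hcs : HasCompactSupport u) {M : ℝ}
    (hM : ∀ y, |u y| ≤ M) (r s : ℝ) :
    Integrable (fun x => Dd u r x * Dd u s x) volume ∧
      |∫ x, Dd u r x * Dd u s x| ≤ 4 * M * (4 * ∫ x, |u x|) := by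
  have hM0 : 0 ≤ M := M_nonneg hM
  have huAbs : Integrable (fun x => |u x|) volume :=
    (hu.abs).integrable_of_hasCompactSupport hcs.abs
  have hadd : Integrable (fun x : ℝ => |u (x + s)|) volume := huAbs.comp_add_right s
  have hsub : Integrable (fun x : ℝ => |u (x - s)|) volume := huAbs.comp_sub_right s
  have hadd2 : Integrable (fun x : ℝ => |u (x + s)| + |u (x - s)|) volume := hadd.add hsub
  have hsum : Integrable (fun x : ℝ => |u (x + s)| + |u (x - s)| + 2 * |u x|) volume :=
    hadd2.add (huAbs.const_mul 2)
  have hDs_cont : Continuous fun x => Dd u s x := Dd_cont_x hu s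
  have hDs_abs_le : ∀ x, |Dd u s x| ≤ |u (x + s)| + |u (x - s)| + 2 * |u x| :=
    fun x => habs3 _ _ _
  have hDsAbs : Integrable (fun x => |Dd u s x|) volume := by
    refine hsum.mono' hDs_cont.abs.aestronglyMeasurable (ae_of_all _ fun x => ?_)
    rw [Real.norm_eq_abs, abs_abs]
    exact hDs_abs_le x
  have hbound : Integrable (fun x => 4 * M * |Dd u s x|) volume := hDsAbs.const_mul _
  have hptw : ∀ x, ‖Dd u r x * Dd u s x‖ ≤ 4 * M * |Dd u s x| := fun x => by
    rw [Real.norm_eq_abs, abs_mul]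
    exact mul_le_mul_of_nonneg_right (Dd_bound hM r x) (abs_nonneg _)
  have hint : Integrable (fun x => Dd u r x * Dd u s x) volume :=
    hbound.mono' ((Dd_cont_x hu r).mul hDs_cont).aestronglyMeasurable (ae_of_all _ hptw)
  refine ⟨hint, ?_⟩
  have hInt1 : (∫ x, |Dd u s x|) ≤ 4 * ∫ x, |u x| := by
    have h1 : (∫ x, |Dd u s x|) ≤ ∫ x, (|u (x + s)| + |u (x - s)| + 2 * |u x|) :=
      integral_mono hDsAbs hsum hDs_abs_le
    have h2 : (∫ x : ℝ, (|u (x + s)| + |u (x - s)| + 2 * |u x|))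
        = 4 * ∫ x, |u x| := by
      rw [integral_add hadd2 (huAbs.const_mul 2), integral_add hadd hsub,
        integral_add_right_eq_self (fun x => |u x|) s,
        integral_sub_right_eq_self (fun x => |u x|) s, integral_const_mul]
      ring
    linarith
  calc |∫ x, Dd u r x * Dd u s x| ≤ ∫ x, 4 * M * |Dd u s x| := by
        have := norm_integral_le_of_norm_le hbound (ae_of_all _ hptw)
        rwa [Real.norm_eq_abs] at this
    _ = 4 * M * ∫ x, |Dd u s x| := integral_const_mul _ _
    _ ≤ 4 * M * (4 * ∫ x, |u x|) := by
        exact mul_le_mul_of_nonneg_left hInt1 (by linarith)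

/-- The key Fubini identity. -/
lemma fubini_key {R₀ : ℝ} (hR₀ : 0 ≤ R₀) {u : ℝ → ℝ} (hu : Continuous u)
    (hcs : HasCompactSupport u) {M : ℝ} (hM : ∀ y, |u y| ≤ M)
    {φt ψt : ℝ → ℝ} (hφi : Integrable φt volume) (hψi : Integrable ψt volume)
    (hφs : ∀ r ∉ Set.Icc (0:ℝ) R₀, φt r = 0) (hψs : ∀ r ∉ Set.Icc (0:ℝ) R₀, ψt r = 0) :
    (∫ r, ψt r * ∫ s, φt s * ∫ x, Dd u r x * Dd u s x)
      = ∫ x, Lop ψt u x * Lop φt u x := by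
  classical
  set K' := Metric.cthickening R₀ (tsupport u) with hK'
  have hK'c : IsCompact K' := hcs.cthickening
  set f : ℝ × ℝ → ℝ → ℝ := fun q x => (ψt q.1 * Dd u q.1 x) * (φt q.2 * Dd u q.2 x) with hf
  have hHm : AEStronglyMeasurable (Function.uncurry f)
      (((volume : Measure ℝ).prod volume).prod volume) := by
    have h1 : AEStronglyMeasurable (fun z : (ℝ × ℝ) × ℝ => ψt z.1.1)
        (((volume : Measure ℝ).prod volume).prod volume) :=
      (hψi.aestronglyMeasurable.comp_fst (ν := volume)).comp_fst (ν := volume)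
    have h2 : AEStronglyMeasurable (fun z : (ℝ × ℝ) × ℝ => φt z.1.2)
        (((volume : Measure ℝ).prod volume).prod volume) :=
      (hφi.aestronglyMeasurable.comp_snd (μ := volume)).comp_fst (ν := volume)
    have h3 : Continuous fun z : (ℝ × ℝ) × ℝ => Dd u z.1.1 z.2 :=
      (Dd_cont hu).comp ((continuous_fst.comp continuous_fst).prodMk continuous_snd)
    have h4 : Continuous fun z : (ℝ × ℝ) × ℝ => Dd u z.1.2 z.2 :=
      (Dd_cont hu).comp ((continuous_snd.comp continuous_fst).prodMk continuous_snd)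
    exact ((h1.mul h3.aestronglyMeasurable).mul (h2.mul h4.aestronglyMeasurable))
  have hBint : Integrable (fun z : (ℝ × ℝ) × ℝ =>
      (|ψt z.1.1| * |φt z.1.2|) * ((4 * M * (4 * M)) * K'.indicator (fun _ => (1:ℝ)) z.2))
      (((volume : Measure ℝ).prod volume).prod volume) := by
    have hB1 : Integrable (fun q : ℝ × ℝ => |ψt q.1| * |φt q.2|)
        ((volume : Measure ℝ).prod volume) := hψi.abs.mul_prod hφi.abs
    have hB2 : Integrable (fun x : ℝ => (4 * M * (4 * M)) * K'.indicator (fun _ => (1:ℝ)) x)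
        volume :=
      ((integrable_indicator_iff hK'c.measurableSet).2
        (integrableOn_const hK'c.measure_lt_top.ne)).const_mul _
    exact hB1.mul_prod hB2
  have hM0 : 0 ≤ M := M_nonneg hM
  have hHint : Integrable (Function.uncurry f)
      (((volume : Measure ℝ).prod volume).prod volume) := by
    refine hBint.mono' hHm (ae_of_all _ fun z => ?_)
    rcases z with ⟨⟨r, s⟩, x⟩
    simp only [Function.uncurry, hf]
    have hBnn : 0 ≤ |ψt r| * |φt s| * (4 * M * (4 * M) * K'.indicator (fun _ => (1:ℝ)) x) := by
      have hind : (0:ℝ) ≤ K'.indicator (fun _ => (1:ℝ)) x :=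
        Set.indicator_nonneg (fun _ _ => zero_le_one) x
      have hM0 : (0:ℝ) ≤ 4 * M * (4 * M) := by positivity
      exact mul_nonneg (mul_nonneg (abs_nonneg _) (abs_nonneg _)) (mul_nonneg hM0 hind)
    by_cases hr : r ∈ Set.Icc (0:ℝ) R₀
    · by_cases hs : s ∈ Set.Icc (0:ℝ) R₀
      · by_cases hx : x ∈ K'
        · rw [Set.indicator_of_mem hx]
          have b1 := Dd_bound hM r x
          have b2 := Dd_bound hM s x
          rw [Real.norm_eq_abs, abs_mul, abs_mul, abs_mul]
          have e1 : |ψt r| * |Dd u r x| * (|φt s| * |Dd u s x|)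
              ≤ |ψt r| * (4*M) * (|φt s| * (4*M)) := by
            apply mul_le_mul
            · exact mul_le_mul_of_nonneg_left b1 (abs_nonneg _)
            · exact mul_le_mul_of_nonneg_left b2 (abs_nonneg _)
            · positivity
            · positivity
          calc |ψt r| * |Dd u r x| * (|φt s| * |Dd u s x|)
              ≤ |ψt r| * (4*M) * (|φt s| * (4*M)) := e1
            _ = |ψt r| * |φt s| * (4 * M * (4 * M) * 1) := by ring
        · rw [Set.indicator_of_notMem hx, Dd_zero hR₀ hr hx]
          simpa using hBnn
      · rw [hφs s hs]
        simp only [zero_mul, mul_zero, norm_zero]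
        simpa using hBnn
    · rw [hψs r hr]
      simp only [zero_mul, norm_zero]
      simpa using hBnn
  have step1 : (∫ r, ψt r * ∫ s, φt s * ∫ x, Dd u r x * Dd u s x)
      = ∫ r, ∫ s, ∫ x, f (r, s) x := by
    congr 1; funext r
    rw [← integral_const_mul]
    congr 1; funext s
    have hx : ∀ x, f (r, s) x = (ψt r * φt s) * (Dd u r x * Dd u s x) := by
      intro x; simp only [hf]; ring
    simp only [hx]
    rw [integral_const_mul]
    ring
  have hInt2 : Integrable (fun q : ℝ × ℝ => ∫ x, Function.uncurry f (q, x))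
      ((volume : Measure ℝ).prod volume) := hHint.integral_prod_left
  have hInt2' : Integrable (Function.uncurry fun r s : ℝ => ∫ x, f (r, s) x)
      ((volume : Measure ℝ).prod volume) := by
    exact hInt2
  have step2 : (∫ r, ∫ s, ∫ x, f (r, s) x)
      = ∫ q : ℝ × ℝ, ∫ x, f q x ∂volume ∂((volume : Measure ℝ).prod volume) := by
    rw [integral_integral hInt2']
  have step3 : (∫ q : ℝ × ℝ, ∫ x, f q x ∂volume ∂((volume : Measure ℝ).prod volume))
      = ∫ x, ∫ q : ℝ × ℝ, f q x ∂((volume : Measure ℝ).prod volume) ∂volume :=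
    integral_integral_swap hHint
  have step4 : ∀ x : ℝ, (∫ q : ℝ × ℝ, f q x ∂((volume : Measure ℝ).prod volume))
      = Lop ψt u x * Lop φt u x := by
    intro x
    have := integral_prod_mul (μ := (volume : Measure ℝ)) (ν := (volume : Measure ℝ))
      (f := fun r => ψt r * Dd u r x) (g := fun s => φt s * Dd u s x)
    exact this
  rw [step1, step2, step3]
  congr 1; funext x; exact step4 x

section WithRho

variable {R₀ : ℝ} {p : ℝ → ℝ} {ρ : Measure ℝ}

/-- Converting `ρ`-integrals to Lebesgue integrals. -/
lemma rho_integral (hR₀ : 0 < R₀) (hpc : ContinuousOn p (Set.Icc 0 R₀))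
    (hpp : ∀ r ∈ Set.Icc (0:ℝ) R₀, 0 < p r)
    (hρ : ρ = (volume.restrict (Set.Icc 0 R₀)).withDensity fun r => ENNReal.ofReal (p r))
    (g : ℝ → ℝ) :
    ∫ r, g r ∂ρ = ∫ r in Set.Icc (0:ℝ) R₀, p r * g r := by
  have hpm : AEMeasurable (fun r => Real.toNNReal (p r))
      (volume.restrict (Set.Icc (0:ℝ) R₀)) :=
    measurable_real_toNNReal.comp_aemeasurable (hpc.aemeasurable measurableSet_Icc)
  rw [hρ]
  rw [show (fun r => ENNReal.ofReal (p r))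
      = (fun r => ((Real.toNNReal (p r) : ℝ≥0) : ℝ≥0∞)) from rfl]
  rw [integral_withDensity_eq_integral_smul₀ hpm g]
  refine setIntegral_congr_fun measurableSet_Icc fun r hr => ?_
  simp [NNReal.smul_def, Real.coe_toNNReal _ (hpp r hr).le]

lemma restrict_ac (hR₀ : 0 < R₀) (hpc : ContinuousOn p (Set.Icc 0 R₀))
    (hpp : ∀ r ∈ Set.Icc (0:ℝ) R₀, 0 < p r)
    (hρ : ρ = (volume.restrict (Set.Icc 0 R₀)).withDensity fun r => ENNReal.ofReal (p r)) :
    volume.restrict (Set.Icc (0:ℝ) R₀) ≪ ρ := by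
  rw [hρ]
  refine withDensity_absolutelyContinuous' ?_ ?_
  · exact (ENNReal.measurable_ofReal.comp_aemeasurable (hpc.aemeasurable measurableSet_Icc))
  · filter_upwards [ae_restrict_mem measurableSet_Icc] with r hr
    simp only [ne_eq, ENNReal.ofReal_eq_zero, not_le]
    exact hpp r hr

lemma trunc_aesm (hR₀ : 0 < R₀) (hpc : ContinuousOn p (Set.Icc 0 R₀))
    (hpp : ∀ r ∈ Set.Icc (0:ℝ) R₀, 0 < p r)
    (hρ : ρ = (volume.restrict (Set.Icc 0 R₀)).withDensity fun r => ENNReal.ofReal (p r))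
    (φ : Lp ℝ 2 ρ) : AEStronglyMeasurable (trunc R₀ φ) volume := by
  refine (aestronglyMeasurable_indicator_iff measurableSet_Icc).2 ?_
  exact (Lp.aestronglyMeasurable φ).mono_ac (restrict_ac hR₀ hpc hpp hρ)

lemma trunc_integrable [IsProbabilityMeasure ρ] (hR₀ : 0 < R₀)
    (hpc : ContinuousOn p (Set.Icc 0 R₀)) (hpp : ∀ r ∈ Set.Icc (0:ℝ) R₀, 0 < p r)
    (hρ : ρ = (volume.restrict (Set.Icc 0 R₀)).withDensity fun r => ENNReal.ofReal (p r))
    (φ : Lp ℝ 2 ρ) : Integrable (trunc R₀ φ) volume := by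
  obtain ⟨c, hc, hcle⟩ : ∃ c > 0, ∀ r ∈ Set.Icc (0:ℝ) R₀, c ≤ p r := by
    obtain ⟨r₀, hr₀, hmin⟩ := isCompact_Icc.exists_isMinOn
      (⟨0, Set.left_mem_Icc.2 hR₀.le⟩ : (Set.Icc (0:ℝ) R₀).Nonempty) hpc
    exact ⟨p r₀, hpp r₀ hr₀, fun r hr => hmin hr⟩
  have hpm : AEMeasurable (fun r => Real.toNNReal (p r))
      (volume.restrict (Set.Icc (0:ℝ) R₀)) :=
    measurable_real_toNNReal.comp_aemeasurable (hpc.aemeasurable measurableSet_Icc)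
  have h1 : Integrable (⇑φ) ρ := MemLp.integrable one_le_two (Lp.memLp φ)
  have h1' : Integrable (⇑φ) ((volume.restrict (Set.Icc (0:ℝ) R₀)).withDensity
      fun r => ((Real.toNNReal (p r) : ℝ≥0) : ℝ≥0∞)) := by
    rw [show (fun r => ((Real.toNNReal (p r) : ℝ≥0) : ℝ≥0∞))
        = (fun r => ENNReal.ofReal (p r)) from rfl, ← hρ]
    exact h1
  have h2 : Integrable (fun r => Real.toNNReal (p r) • (φ : ℝ → ℝ) r)
      (volume.restrict (Set.Icc (0:ℝ) R₀)) :=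
    (integrable_withDensity_iff_integrable_smul₀ hpm).1 h1'
  have h3 : IntegrableOn (φ : ℝ → ℝ) (Set.Icc (0:ℝ) R₀) volume := by
    refine (h2.norm.const_mul c⁻¹).mono'
      ((Lp.aestronglyMeasurable φ).mono_ac (restrict_ac hR₀ hpc hpp hρ)) ?_
    filter_upwards [ae_restrict_mem measurableSet_Icc] with r hr
    have hpr : c ≤ p r := hcle r hr
    have hp0 : 0 ≤ p r := (hpp r hr).le
    have hnorm : ‖Real.toNNReal (p r) • (φ : ℝ → ℝ) r‖ = p r * |(φ : ℝ → ℝ) r| := by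
      rw [NNReal.smul_def, norm_smul, Real.norm_eq_abs, Real.norm_eq_abs,
        abs_of_nonneg (NNReal.coe_nonneg _), Real.coe_toNNReal _ hp0]
    rw [Real.norm_eq_abs, hnorm]
    have h4 : (1:ℝ) ≤ c⁻¹ * p r := by
      rw [mul_comm, ← div_eq_mul_inv]
      exact (one_le_div hc).2 hpr
    nlinarith [abs_nonneg ((φ : ℝ → ℝ) r)]
  exact (integrable_indicator_iff measurableSet_Icc).2 h3

end WithRho


/-- The key identity: the quadratic form of `T` equals the mean of `L²(ℝ)` pairings of
nonlocal operators. -/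
theorem inner_T_eq (R₀ : ℝ) (hR₀ : 0 < R₀)
    (N : ℕ) (u : Fin N → ℝ → ℝ)
    (hu : ∀ i, Continuous (u i)) (hcs : ∀ i, HasCompactSupport (u i))
    (p : ℝ → ℝ) (hpc : ContinuousOn p (Set.Icc 0 R₀)) (hpp : ∀ r ∈ Set.Icc 0 R₀, 0 < p r)
    (ρ : Measure ℝ) [IsProbabilityMeasure ρ]
    (hρ : ρ = (volume.restrict (Set.Icc 0 R₀)).withDensity fun r => ENNReal.ofReal (p r))
    (T : Lp ℝ 2 ρ →L[ℝ] Lp ℝ 2 ρ)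
    (hT : ∀ φ : Lp ℝ 2 ρ,
      (T φ : ℝ → ℝ) =ᵐ[ρ] fun r => ∫ s, (φ : ℝ → ℝ) s * Gbar N u p r s ∂ρ)
    (φ ψ : Lp ℝ 2 ρ) :
    ⟪T φ, ψ⟫ = (N : ℝ)⁻¹ * ∑ i, ∫ x, LopLp R₀ ψ (u i) x * LopLp R₀ φ (u i) x := by
  classical
  choose M hM using fun i => (hcs i).exists_bound_of_continuous (hu i)
  have hMa : ∀ i y, |u i y| ≤ M i := fun i y => by simpa [Real.norm_eq_abs] using hM i y
  set φt := trunc R₀ φ with hφt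
  set ψt := trunc R₀ ψ with hψt
  have hφi : Integrable φt volume := trunc_integrable hR₀ hpc hpp hρ φ
  have hψi : Integrable ψt volume := trunc_integrable hR₀ hpc hpp hρ ψ
  have hφs : ∀ r ∉ Set.Icc (0:ℝ) R₀, φt r = 0 := trunc_zero R₀ φ
  have hψs : ∀ r ∉ Set.Icc (0:ℝ) R₀, ψt r = 0 := trunc_zero R₀ ψ
  set g : Fin N → ℝ → ℝ → ℝ := fun i r s => ∫ x, Dd (u i) r x * Dd (u i) s x with hgdef
  set C : Fin N → ℝ := fun i => 4 * M i * (4 * ∫ x, |u i x|) with hC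
  have hgb : ∀ i r s, |g i r s| ≤ C i := fun i r s =>
    (g_facts (hu i) (hcs i) (hMa i) r s).2
  have hgj : ∀ i, StronglyMeasurable fun q : ℝ × ℝ => g i q.1 q.2 := by
    intro i
    apply StronglyMeasurable.integral_prod_right'
      (f := fun z : (ℝ × ℝ) × ℝ => Dd (u i) z.1.1 z.2 * Dd (u i) z.1.2 z.2)
    exact (((Dd_cont (hu i)).comp ((continuous_fst.comp continuous_fst).prodMk
      continuous_snd)).mul ((Dd_cont (hu i)).comp ((continuous_snd.comp
      continuous_fst).prodMk continuous_snd))).stronglyMeasurable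
  have hGker : ∀ r s : ℝ, Gker N u r s = (N:ℝ)⁻¹ * ∑ i, g i r s := fun r s => rfl
  have hsint : ∀ i r, Integrable (fun s => φt s * g i r s) volume := by
    intro i r
    have hmeas : AEStronglyMeasurable (fun s => g i r s) volume :=
      ((hgj i).comp_measurable measurable_prodMk_left).aestronglyMeasurable
    refine (hφi.abs.mul_const (C i)).mono'
      (hφi.aestronglyMeasurable.mul hmeas) (ae_of_all _ fun s => ?_)
    rw [Real.norm_eq_abs, abs_mul]
    exact mul_le_mul_of_nonneg_left (hgb i r s) (abs_nonneg _)
  have hstar : ⟪T φ, ψ⟫ = ∫ r, ψt r * ∫ s, φt s * Gker N u r s := by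
    have e1 : ⟪T φ, ψ⟫ = ∫ r, (T φ : ℝ → ℝ) r * (ψ : ℝ → ℝ) r ∂ρ := by
      rw [L2.inner_def]
      refine integral_congr_ae (ae_of_all _ fun r => ?_)
      simp [RCLike.inner_apply, conj_trivial]
      ring
    have e2 : (∫ r, (T φ : ℝ → ℝ) r * (ψ : ℝ → ℝ) r ∂ρ)
        = ∫ r, (∫ s, (φ : ℝ → ℝ) s * Gbar N u p r s ∂ρ) * (ψ : ℝ → ℝ) r ∂ρ := by
      refine integral_congr_ae ?_
      filter_upwards [hT φ] with r hr
      rw [hr]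
    have e3 : (∫ r, (∫ s, (φ : ℝ → ℝ) s * Gbar N u p r s ∂ρ) * (ψ : ℝ → ℝ) r ∂ρ)
        = ∫ r in Set.Icc (0:ℝ) R₀,
            p r * ((∫ s, (φ : ℝ → ℝ) s * Gbar N u p r s ∂ρ) * (ψ : ℝ → ℝ) r) :=
      rho_integral hR₀ hpc hpp hρ _
    have e4 : (∫ r in Set.Icc (0:ℝ) R₀,
          p r * ((∫ s, (φ : ℝ → ℝ) s * Gbar N u p r s ∂ρ) * (ψ : ℝ → ℝ) r))
        = ∫ r in Set.Icc (0:ℝ) R₀,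
            (∫ s in Set.Icc (0:ℝ) R₀, (φ : ℝ → ℝ) s * Gker N u r s) * (ψ : ℝ → ℝ) r := by
      refine setIntegral_congr_fun measurableSet_Icc fun r hr => ?_
      rw [rho_integral hR₀ hpc hpp hρ (fun s => (φ : ℝ → ℝ) s * Gbar N u p r s)]
      have hpr : p r ≠ 0 := (hpp r hr).ne'
      have hcongr : ∀ s ∈ Set.Icc (0:ℝ) R₀,
          p s * ((φ : ℝ → ℝ) s * Gbar N u p r s)
            = ((φ : ℝ → ℝ) s * Gker N u r s) * (p r)⁻¹ := by
        intro s hs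
        have hps : p s ≠ 0 := (hpp s hs).ne'
        rw [Gbar]
        field_simp
      rw [setIntegral_congr_fun measurableSet_Icc hcongr, integral_mul_const]
      field_simp
    have e5 : (∫ r in Set.Icc (0:ℝ) R₀,
          (∫ s in Set.Icc (0:ℝ) R₀, (φ : ℝ → ℝ) s * Gker N u r s) * (ψ : ℝ → ℝ) r)
        = ∫ r, ψt r * ∫ s, φt s * Gker N u r s := by
      rw [← integral_indicator measurableSet_Icc]
      congr 1
      funext r
      by_cases hr : r ∈ Set.Icc (0:ℝ) R₀
      · rw [Set.indicator_of_mem hr]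
        have hin : (∫ s in Set.Icc (0:ℝ) R₀, (φ : ℝ → ℝ) s * Gker N u r s)
            = ∫ s, φt s * Gker N u r s := by
          rw [← integral_indicator measurableSet_Icc]
          congr 1
          funext s
          by_cases hs : s ∈ Set.Icc (0:ℝ) R₀
          · rw [Set.indicator_of_mem hs]
            simp [hφt, trunc, Set.indicator_of_mem hs]
          · rw [Set.indicator_of_notMem hs, hφs s hs, zero_mul]
        have hψr : ψt r = (ψ : ℝ → ℝ) r := by simp [hψt, trunc, Set.indicator_of_mem hr]
        rw [hin, hψr]
        ring
      · rw [Set.indicator_of_notMem hr, hψs r hr, zero_mul]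
    rw [e1, e2, e3, e4, e5]
  have hsum1 : ∀ r, (∫ s, φt s * Gker N u r s)
      = (N:ℝ)⁻¹ * ∑ i, ∫ s, φt s * g i r s := by
    intro r
    have hfun : (fun s => φt s * Gker N u r s)
        = fun s => ∑ i, (N:ℝ)⁻¹ * (φt s * g i r s) := by
      funext s
      rw [hGker r s, Finset.mul_sum, Finset.mul_sum]
      exact Finset.sum_congr rfl fun i _ => by ring
    rw [hfun, integral_finset_sum _ (fun i _ => (hsint i r).const_mul _)]
    simp_rw [integral_const_mul]
    rw [← Finset.mul_sum]
  have hbnd2 : ∀ i r, |∫ s, φt s * g i r s| ≤ (∫ s, |φt s|) * C i := by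
    intro i r
    have hptw : ∀ s, ‖φt s * g i r s‖ ≤ |φt s| * C i := fun s => by
      rw [Real.norm_eq_abs, abs_mul]
      exact mul_le_mul_of_nonneg_left (hgb i r s) (abs_nonneg _)
    have h := norm_integral_le_of_norm_le (hφi.abs.mul_const (C i)) (ae_of_all _ hptw)
    rw [Real.norm_eq_abs, integral_mul_const] at h
    exact h
  have hrint : ∀ i, Integrable (fun r => ψt r * ∫ s, φt s * g i r s) volume := by
    intro i
    have haesm : AEStronglyMeasurable (fun r => ∫ s, φt s * g i r s) volume := by
      have hj : AEStronglyMeasurable (fun q : ℝ × ℝ => φt q.2 * g i q.1 q.2)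
          ((volume : Measure ℝ).prod volume) :=
        (hφi.aestronglyMeasurable.comp_snd).mul (hgj i).aestronglyMeasurable
      exact hj.integral_prod_right'
    refine (hψi.abs.mul_const ((∫ s, |φt s|) * C i)).mono'
      (hψi.aestronglyMeasurable.mul haesm) (ae_of_all _ fun r => ?_)
    rw [Real.norm_eq_abs, abs_mul]
    exact mul_le_mul_of_nonneg_left (hbnd2 i r) (abs_nonneg _)
  have hsum2 : (∫ r, ψt r * ∫ s, φt s * Gker N u r s)
      = (N:ℝ)⁻¹ * ∑ i, ∫ r, ψt r * ∫ s, φt s * g i r s := by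
    have hfun : (fun r => ψt r * ∫ s, φt s * Gker N u r s)
        = fun r => ∑ i, (N:ℝ)⁻¹ * (ψt r * ∫ s, φt s * g i r s) := by
      funext r
      rw [hsum1 r, Finset.mul_sum, Finset.mul_sum]
      exact Finset.sum_congr rfl fun i _ => by ring
    rw [hfun, integral_finset_sum _ (fun i _ => (hrint i).const_mul _)]
    simp_rw [integral_const_mul]
    rw [← Finset.mul_sum]
  have hfub : ∀ i, (∫ r, ψt r * ∫ s, φt s * g i r s)
      = ∫ x, Lop ψt (u i) x * Lop φt (u i) x := fun i =>
    fubini_key hR₀.le (hu i) (hcs i) (hMa i) hφi hψi hφs hψs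
  have hLop : ∀ (χ : Lp ℝ 2 ρ) (i : Fin N) (x : ℝ),
      LopLp R₀ χ (u i) x = Lop (trunc R₀ χ) (u i) x := fun χ i x =>
    Lop_rep (hu i) (hMa i) (trunc_integrable hR₀ hpc hpp hρ χ) (trunc_zero R₀ χ) x
  rw [hstar, hsum2]
  congr 1
  refine Finset.sum_congr rfl fun i _ => ?_
  rw [hfub i]
  congr 1
  funext x
  rw [hLop ψ i x, hLop φ i x]

/-- On `V = (ker L_Ḡ)^⊥`, the element `φ̂` with `L_Ḡ φ̂ = P φ^f` is unique and is the unique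
minimizer of the loss functional over `V`. -/
theorem unique_minimizer_on_FSOI (R₀ : ℝ) (hR₀ : 0 < R₀)
    (N : ℕ) (hN : 0 < N) (u : Fin N → ℝ → ℝ)
    (hu : ∀ i, Continuous (u i)) (hcs : ∀ i, HasCompactSupport (u i))
    (f : Fin N → Lp ℝ 2 (volume : Measure ℝ))
    (p : ℝ → ℝ) (hpc : ContinuousOn p (Set.Icc 0 R₀)) (hpp : ∀ r ∈ Set.Icc 0 R₀, 0 < p r)
    (ρ : Measure ℝ) [IsProbabilityMeasure ρ]
    (hρ : ρ = (volume.restrict (Set.Icc 0 R₀)).withDensity fun r => ENNReal.ofReal (p r))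
    (T : Lp ℝ 2 ρ →L[ℝ] Lp ℝ 2 ρ)
    (hT : ∀ φ : Lp ℝ 2 ρ,
      (T φ : ℝ → ℝ) =ᵐ[ρ] fun r => ∫ s, (φ : ℝ → ℝ) s * Gbar N u p r s ∂ρ)
    (φf : Lp ℝ 2 ρ)
    (hφf : ∀ ψ : Lp ℝ 2 ρ,
      ⟪φf, ψ⟫ = (N : ℝ)⁻¹ * ∑ i, ∫ x, LopLp R₀ ψ (u i) x * (f i : ℝ → ℝ) x)
    (φhat : Lp ℝ 2 ρ) (hmem : φhat ∈ (LinearMap.ker (T : Lp ℝ 2 ρ →ₗ[ℝ] Lp ℝ 2 ρ))ᗮ)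
    (heq : T φhat = (Submodule.orthogonalProjectionOnto (LinearMap.ker (T : Lp ℝ 2 ρ →ₗ[ℝ] Lp ℝ 2 ρ))ᗮ φf : Lp ℝ 2 ρ)) :
    (∀ φ' ∈ (LinearMap.ker (T : Lp ℝ 2 ρ →ₗ[ℝ] Lp ℝ 2 ρ))ᗮ,
        T φ' = (Submodule.orthogonalProjectionOnto (LinearMap.ker (T : Lp ℝ 2 ρ →ₗ[ℝ] Lp ℝ 2 ρ))ᗮ φf : Lp ℝ 2 ρ) → φ' = φhat) ∧
    (∀ φ ∈ (LinearMap.ker (T : Lp ℝ 2 ρ →ₗ[ℝ] Lp ℝ 2 ρ))ᗮ, φ ≠ φhat →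
        lossE R₀ N u (fun i => (f i : ℝ → ℝ)) φhat
          < lossE R₀ N u (fun i => (f i : ℝ → ℝ)) φ) := by
  classical
  have key : ∀ a b : Lp ℝ 2 ρ,
      ⟪T a, b⟫ = (N : ℝ)⁻¹ * ∑ i, ∫ x, LopLp R₀ b (u i) x * LopLp R₀ a (u i) x :=
    fun a b => inner_T_eq R₀ hR₀ N u hu hcs p hpc hpp ρ hρ T hT a b
  have hker0 : ∀ χ : Lp ℝ 2 ρ, χ ∈ LinearMap.ker (T : Lp ℝ 2 ρ →ₗ[ℝ] Lp ℝ 2 ρ) → χ ∈ (LinearMap.ker (T : Lp ℝ 2 ρ →ₗ[ℝ] Lp ℝ 2 ρ))ᗮ → χ = 0 := by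
    intro χ h1 h2
    exact inner_self_eq_zero.1 ((Submodule.mem_orthogonal _ χ).1 h2 χ h1)
  constructor
  · intro φ' hφ' heq'
    have h0 : T (φ' - φhat) = 0 := by rw [map_sub, heq', heq, sub_self]
    have hk : φ' - φhat ∈ LinearMap.ker (T : Lp ℝ 2 ρ →ₗ[ℝ] Lp ℝ 2 ρ) := LinearMap.mem_ker.2 h0
    exact sub_eq_zero.1 (hker0 _ hk (Submodule.sub_mem _ hφ' hmem))
  · intro φ hφV hne
    have hψV : φ - φhat ∈ (LinearMap.ker (T : Lp ℝ 2 ρ →ₗ[ℝ] Lp ℝ 2 ρ))ᗮ := Submodule.sub_mem _ hφV hmem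
    have hψne : φ - φhat ≠ 0 := sub_ne_zero.2 hne
    choose M hM using fun i => (hcs i).exists_bound_of_continuous (hu i)
    have hMa : ∀ i y, |u i y| ≤ M i := fun i y => by simpa [Real.norm_eq_abs] using hM i y
    have hLmem : ∀ (a : Lp ℝ 2 ρ) (i : Fin N), MemLp (LopLp R₀ a (u i)) 2 volume := by
      intro a i
      have heqf : LopLp R₀ a (u i) = Lop (trunc R₀ a) (u i) := by
        funext x
        exact Lop_rep (hu i) (hMa i) (trunc_integrable hR₀ hpc hpp hρ a) (trunc_zero R₀ a) x
      rw [heqf]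
      exact Lop_memℒp hR₀.le (hu i) (hcs i) (hMa i)
        (trunc_integrable hR₀ hpc hpp hρ a) (trunc_zero R₀ a)
    have hloss : ∀ a : Lp ℝ 2 ρ, lossE R₀ N u (fun i => ((f i : ℝ → ℝ))) a
        = ⟪T a, a⟫ - 2 * ⟪φf, a⟫
          + (N:ℝ)⁻¹ * ∑ i, ∫ x, (f i : ℝ → ℝ) x * (f i : ℝ → ℝ) x := by
      intro a
      have hterm : ∀ i : Fin N, (∫ x, (LopLp R₀ a (u i) x - (f i : ℝ → ℝ) x)^2)
          = (∫ x, LopLp R₀ a (u i) x * LopLp R₀ a (u i) x)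
            - 2 * (∫ x, LopLp R₀ a (u i) x * (f i : ℝ → ℝ) x)
            + ∫ x, (f i : ℝ → ℝ) x * (f i : ℝ → ℝ) x := by
        intro i
        have hL := hLmem a i
        have hf2 := Lp.memLp (f i)
        have h1 := memℒ2_mul_integrable hL hL
        have h2 := memℒ2_mul_integrable hL hf2
        have h3 := memℒ2_mul_integrable hf2 hf2
        have e : (fun x => (LopLp R₀ a (u i) x - (f i : ℝ → ℝ) x)^2)
            = fun x => (LopLp R₀ a (u i) x * LopLp R₀ a (u i) x
              - 2 * (LopLp R₀ a (u i) x * (f i : ℝ → ℝ) x))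
              + (f i : ℝ → ℝ) x * (f i : ℝ → ℝ) x := by
          funext x; ring
        have h2' : Integrable (fun x => 2 * (LopLp R₀ a (u i) x * (f i : ℝ → ℝ) x))
            volume := h2.const_mul 2
        have h12 : Integrable (fun x => LopLp R₀ a (u i) x * LopLp R₀ a (u i) x
            - 2 * (LopLp R₀ a (u i) x * (f i : ℝ → ℝ) x)) volume := h1.sub h2'
        rw [e, integral_add h12 h3, integral_sub h1 h2', integral_const_mul]
      simp only [lossE]
      rw [key a a, hφf a]
      rw [Finset.sum_congr rfl fun i (_ : i ∈ Finset.univ) => hterm i]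
      rw [Finset.sum_add_distrib, Finset.sum_sub_distrib, ← Finset.mul_sum]
      ring
    have hsym : ∀ a b : Lp ℝ 2 ρ, ⟪T a, b⟫ = ⟪T b, a⟫ := by
      intro a b
      rw [key a b, key b a]
      congr 1
      refine Finset.sum_congr rfl fun i _ => ?_
      congr 1
      funext x
      ring
    have hinner_step : ⟪φf, φ - φhat⟫ = ⟪T φhat, φ - φhat⟫ := by
      have horth := Submodule.sub_starProjection_mem_orthogonal
        (K := (LinearMap.ker (T : Lp ℝ 2 ρ →ₗ[ℝ] Lp ℝ 2 ρ))ᗮ) φf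
      have h0 : ⟪φ - φhat, φf - ((Submodule.orthogonalProjectionOnto (LinearMap.ker (T : Lp ℝ 2 ρ →ₗ[ℝ] Lp ℝ 2 ρ))ᗮ φf : Lp ℝ 2 ρ))⟫ = 0 :=
        (Submodule.mem_orthogonal _ _).1 horth _ hψV
      rw [inner_sub_right] at h0
      have h1 : ⟪φ - φhat, φf⟫
          = ⟪φ - φhat, ((Submodule.orthogonalProjectionOnto (LinearMap.ker (T : Lp ℝ 2 ρ →ₗ[ℝ] Lp ℝ 2 ρ))ᗮ φf : Lp ℝ 2 ρ))⟫ := by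
        linarith
      rw [real_inner_comm, h1, ← heq, real_inner_comm]
    have hdiff : lossE R₀ N u (fun i => ((f i : ℝ → ℝ))) φ
        - lossE R₀ N u (fun i => ((f i : ℝ → ℝ))) φhat
        = ⟪T (φ - φhat), φ - φhat⟫ := by
      rw [hloss φ, hloss φhat]
      have hrepr : φ = φhat + (φ - φhat) := by abel
      have expand : ⟪T φ, φ⟫ = ⟪T φhat, φhat⟫ + ⟪T φhat, φ - φhat⟫
          + ⟪T (φ - φhat), φhat⟫ + ⟪T (φ - φhat), φ - φhat⟫ := by
        calc ⟪T φ, φ⟫ = ⟪T (φhat + (φ - φhat)), φhat + (φ - φhat)⟫ := by rw [← hrepr]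
          _ = _ := by
              rw [map_add, inner_add_left, inner_add_right, inner_add_right]
              ring
      have hTsub : ⟪T (φ - φhat), φhat⟫ = ⟪T φhat, φ - φhat⟫ := hsym _ _
      have hfsub : ⟪φf, φ - φhat⟫ = ⟪φf, φ⟫ - ⟪φf, φhat⟫ := inner_sub_right _ _ _
      rw [expand, hTsub]
      linarith [hinner_step, hfsub]
    have hnn : ∀ a : Lp ℝ 2 ρ, 0 ≤ ⟪T a, a⟫ := by
      intro a
      rw [key a a]
      exact mul_nonneg (inv_nonneg.2 (Nat.cast_nonneg N))
        (Finset.sum_nonneg fun i _ => integral_nonneg fun x => mul_self_nonneg _)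
    have hpos : 0 < ⟪T (φ - φhat), φ - φhat⟫ := by
      rcases (hnn (φ - φhat)).lt_or_eq with h | h
      · exact h
      · exfalso
        have hNne : ((N:ℝ)⁻¹ : ℝ) ≠ 0 := inv_ne_zero (Nat.cast_ne_zero.2 hN.ne')
        have hc0 : (N:ℝ)⁻¹ * ∑ i, ∫ x, LopLp R₀ (φ - φhat) (u i) x
            * LopLp R₀ (φ - φhat) (u i) x = 0 := by
          rw [← key (φ - φhat) (φ - φhat), ← h]
        have hsum0 : ∑ i, ∫ x, LopLp R₀ (φ - φhat) (u i) x
            * LopLp R₀ (φ - φhat) (u i) x = 0 := by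
          rcases mul_eq_zero.1 hc0 with h' | h'
          · exact absurd h' hNne
          · exact h'
        have hterm0 := (Finset.sum_eq_zero_iff_of_nonneg
          (fun i _ => integral_nonneg fun x => mul_self_nonneg _)).1 hsum0
        have hae : ∀ i : Fin N, (LopLp R₀ (φ - φhat) (u i)) =ᵐ[volume] 0 := by
          intro i
          have hint : Integrable (fun x => LopLp R₀ (φ - φhat) (u i) x
              * LopLp R₀ (φ - φhat) (u i) x) volume :=
            memℒ2_mul_integrable (hLmem _ i) (hLmem _ i)
          have h0 := (integral_eq_zero_iff_of_nonneg_ae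
            (ae_of_all _ fun x => mul_self_nonneg _) hint).1
            (hterm0 i (Finset.mem_univ i))
          filter_upwards [h0] with x hx
          exact mul_self_eq_zero.1 hx
        have hT0 : T (φ - φhat) = 0 := by
          have hzero : ∀ b : Lp ℝ 2 ρ, ⟪T (φ - φhat), b⟫ = 0 := by
            intro b
            rw [key]
            have hz : ∀ i ∈ Finset.univ,
                (∫ x, LopLp R₀ b (u i) x * LopLp R₀ (φ - φhat) (u i) x) = 0 := by
              intro i _
              refine integral_eq_zero_of_ae ?_
              filter_upwards [hae i] with x hx
              simp only [Pi.zero_apply] at hx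
              rw [hx, mul_zero]
              rfl
            rw [Finset.sum_eq_zero hz, mul_zero]
          exact inner_self_eq_zero.1 (hzero (T (φ - φhat)))
        exact hψne (hker0 _ (LinearMap.mem_ker.2 hT0) hψV)
    linarith [hdiff, hpos]
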